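/- Fix 0 < p < 1 and let F_p(α) = p²α^{−2} + 2p(2−p) + (2−p)²α² − 4(α^{−p} + α^{2−p} − 1). Then F_p(α₂) < 0 for α₂ = √(p/(2−p)); equivalently, 2 > (1 + 2p − p²) · p^{p/2} (2−p)^{(2−p)/2} for all 0 < p < 1. Moreover, if α₁ is the unique solution in (0,1) of 1 + α² = 2α^p, then F_p(α₁) > 0. -/

import Mathlib

/-- The function `F_p(α) = p²α^{-2} + 2p(2-p) + (2-p)²α² - 4(α^{-p} + α^{2-p} - 1)`. -/
noncomputable def Fp (p a : ℝ) : ℝ :=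
  p ^ 2 * a ^ (-2 : ℝ) + 2 * p * (2 - p) + (2 - p) ^ 2 * a ^ 2
    - 4 * (a ^ (-p) + a ^ (2 - p) - 1)

/-!
Write `e = 1 - p`, `K = p^(p/2) (2 - p)^((2 - p)/2)` and
`φ(e) = (1 - e) log (1 - e) + (1 + e) log (1 + e) = ∑ e^(2n) / (n (2n - 1))`.
Since `F_p(α₂) = 4 ((1 + 2p - p²) K - 2) / K`, the first claim is the second, which after taking
logarithms says `φ(e) + 2 log (1 - e²/2) < 0`. In `u = e²` the power series of the left side is
`-u²/12 - u³/60 + (terms with nonnegative coefficients)`; it vanishes at `u = 1`, so the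
nonnegative tail is at most `u⁴ (1/12 + 1/60)`, leaving `u² (u - 1) (6u + 5) / 60 < 0`.

On the curve `1 + α² = 2α^p` one has `F_p(α) = (p/α + (2 - p)α)² - 4`, which is positive once
`α₁ < p/(2 - p)`. That comparison holds because `2x^p - 1 - x²` is strictly concave, vanishes at
`1`, and is positive at `p/(2 - p)` by `log (1 + e²) < e² ≤ φ(e)`.
-/

open Real Filter Topology Set

theorem le_of_tendsto_nhdsLT_of_hasSum_pow {c : ℕ → ℝ} {R : ℝ → ℝ} {L u : ℝ}
    (hc : ∀ n, 0 ≤ c n)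
    (hR : ∀ v ∈ Ioo (0 : ℝ) 1, HasSum (fun n => c n * v ^ n) (R v))
    (hL : Tendsto R (𝓝[<] 1) (𝓝 L)) (hu : u ∈ Ioo (0 : ℝ) 1) : R u ≤ L := by
  refine ge_of_tendsto hL ?_
  filter_upwards [Ioo_mem_nhdsLT hu.2] with v hv
  refine hasSum_le (fun n => ?_) (hR u hu) (hR v ⟨hu.1.trans hv.1, hv.2⟩)
  exact mul_le_mul_of_nonneg_left (pow_le_pow_left₀ hu.1.le hv.1.le n) (hc n)

-- With `log 0 = 0` this is the continuous extension of `φ` to `e = ±1`.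
noncomputable def symmMulLog (e : ℝ) : ℝ := (1 - e) * log (1 - e) + (1 + e) * log (1 + e)

theorem symmMulLog_one_sub (p : ℝ) : symmMulLog (1 - p) = p * log p + (2 - p) * log (2 - p) := by
  rw [symmMulLog, sub_sub_cancel, show 1 + (1 - p) = 2 - p by ring]

theorem hasSum_symmMulLog {e : ℝ} (he : |e| < 1) :
    HasSum (fun n : ℕ => (e ^ 2) ^ (n + 1) / ((n + 1) * (2 * n + 1))) (symmMulLog e) := by
  have h1 : 0 < 1 - e := by linarith [le_abs_self e]
  have h2 : 0 < 1 + e := by linarith [neg_abs_le e]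
  have hsq : |e ^ 2| < 1 := by
    rw [abs_pow, sq_lt_one_iff₀ (abs_nonneg e)]; exact he
  have hlog : log (1 - e ^ 2) = log (1 - e) + log (1 + e) := by
    rw [← log_mul h1.ne' h2.ne']; ring_nf
  have h := ((hasSum_log_sub_log_of_abs_lt_one he).mul_left e).sub
    (hasSum_pow_div_log_of_abs_lt_one hsq)
  rw [hlog, show e * (log (1 + e) - log (1 - e)) - -(log (1 - e) + log (1 + e))
    = symmMulLog e by rw [symmMulLog]; ring] at h
  refine h.congr_fun fun n => ?_
  field_simp
  ring

theorem sq_le_symmMulLog {e : ℝ} (he : |e| < 1) : e ^ 2 ≤ symmMulLog e := by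
  simpa using sum_le_hasSum (Finset.range 1) (fun n _ => by positivity) (hasSum_symmMulLog he)

noncomputable def defectCoeff (n : ℕ) : ℝ := 1 / ((n + 1) * (2 * n + 1)) - 1 / ((n + 1) * 2 ^ n)

theorem hasSum_symmMulLog_add_two_mul_log {e : ℝ} (he : |e| < 1) :
    HasSum (fun n : ℕ => defectCoeff n * (e ^ 2) ^ (n + 1))
      (symmMulLog e + 2 * log (1 - e ^ 2 / 2)) := by
  have hhalf : |e ^ 2 / 2| < 1 := by
    rw [abs_div, abs_pow, abs_two, div_lt_one two_pos]
    nlinarith [abs_nonneg e]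
  have h := (hasSum_symmMulLog he).sub ((hasSum_pow_div_log_of_abs_lt_one hhalf).mul_left 2)
  rw [mul_neg, sub_neg_eq_add] at h
  refine h.congr_fun fun n => ?_
  rw [defectCoeff, div_pow, pow_succ (2 : ℝ) n]
  field_simp

theorem defectCoeff_nonneg (n : ℕ) : 0 ≤ defectCoeff (n + 3) := by
  have h : (2 * n + 7 : ℝ) ≤ 2 ^ (n + 3) := by
    have : (n + 1 : ℝ) ≤ 2 ^ n := by exact_mod_cast Nat.lt_two_pow_self
    rw [pow_add]; linarith
  rw [defectCoeff, sub_nonneg]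
  gcongr
  push_cast
  linarith

@[fun_prop]
theorem continuous_symmMulLog : Continuous symmMulLog := by
  unfold symmMulLog; fun_prop

theorem symmMulLog_one : symmMulLog 1 = 2 * log 2 := by
  norm_num [symmMulLog]

theorem symmMulLog_add_two_mul_log_le {e : ℝ} (he0 : 0 < e) (he1 : e < 1) :
    symmMulLog e + 2 * log (1 - e ^ 2 / 2)
      ≤ -(e ^ 2) ^ 2 / 12 - (e ^ 2) ^ 3 / 60 + (e ^ 2) ^ 4 / 10 := by
  set R : ℝ → ℝ := fun v =>
    (symmMulLog √v + 2 * log (1 - v / 2) + v ^ 2 / 12 + v ^ 3 / 60) / v ^ 4 with hR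
  have htail : ∀ v ∈ Ioo (0 : ℝ) 1, HasSum (fun n => defectCoeff (n + 3) * v ^ n) (R v) := by
    intro v hv
    have hsq : √v ^ 2 = v := sq_sqrt hv.1.le
    have hsqrt : |√v| < 1 := by
      rw [abs_of_nonneg (sqrt_nonneg v), sqrt_lt' one_pos, one_pow]; exact hv.2
    have h := (hasSum_nat_add_iff' 3).mpr (hasSum_symmMulLog_add_two_mul_log hsqrt)
    have hhead :
        ∑ i ∈ Finset.range 3, defectCoeff i * v ^ (i + 1) = -v ^ 2 / 12 - v ^ 3 / 60 := by
      norm_num [Finset.sum_range_succ, defectCoeff]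
      ring
    rw [hsq, hhead, show ∀ x : ℝ, x - (-v ^ 2 / 12 - v ^ 3 / 60) = x + v ^ 2 / 12 + v ^ 3 / 60
      from fun x => by ring] at h
    refine (h.div_const (v ^ 4)).congr_fun fun n => ?_
    rw [eq_div_iff (pow_pos hv.1 4).ne']
    ring
  have hlim : Tendsto R (𝓝[<] 1) (𝓝 (1 / 10)) := by
    have hcont : ContinuousAt R 1 := by
      rw [hR]; fun_prop (disch := norm_num)
    convert hcont.tendsto.mono_left nhdsWithin_le_nhds using 2
    norm_num [hR, symmMulLog_one]
    rw [show log (1 / 2 : ℝ) = -log 2 by rw [one_div, log_inv]]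
    ring
  have hu : e ^ 2 ∈ Ioo (0 : ℝ) 1 := ⟨by positivity, by nlinarith⟩
  have key := le_of_tendsto_nhdsLT_of_hasSum_pow defectCoeff_nonneg htail hlim hu
  simp only [hR, sqrt_sq he0.le] at key
  rw [div_le_iff₀ (by positivity)] at key
  linarith

theorem symmMulLog_add_two_mul_log_neg {e : ℝ} (he0 : 0 < e) (he1 : e < 1) :
    symmMulLog e + 2 * log (1 - e ^ 2 / 2) < 0 := by
  have hu0 : 0 < e ^ 2 := by positivity
  have hu1 : e ^ 2 < 1 := by nlinarith
  calc symmMulLog e + 2 * log (1 - e ^ 2 / 2)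
      ≤ -(e ^ 2) ^ 2 / 12 - (e ^ 2) ^ 3 / 60 + (e ^ 2) ^ 4 / 10 :=
        symmMulLog_add_two_mul_log_le he0 he1
    _ = (e ^ 2) ^ 2 * (e ^ 2 - 1) * (6 * e ^ 2 + 5) / 60 := by ring
    _ < 0 := div_neg_of_neg_of_pos
        (mul_neg_of_neg_of_pos (mul_neg_of_pos_of_neg (by positivity) (by linarith))
          (by positivity)) (by norm_num)

theorem Fp_eq {p a : ℝ} (ha : 0 < a) :
    Fp p a = (p / a + (2 - p) * a) ^ 2 - 4 * (a ^ (-p) * (1 + a ^ 2) - 1) := by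
  have h2 : a ^ (-2 : ℝ) = (a ^ 2)⁻¹ := by
    rw [rpow_neg ha.le, ← rpow_natCast]; norm_num
  have h2p : a ^ (2 - p) = a ^ 2 * a ^ (-p) := by
    rw [sub_eq_add_neg, rpow_add ha, ← rpow_natCast]; norm_num
  rw [Fp, h2, h2p]
  field_simp
  ring

theorem Fp_sqrt_eq {p : ℝ} (hp0 : 0 < p) (hp2 : p < 2) :
    Fp p √(p / (2 - p)) = 4 * ((1 + 2 * p - p ^ 2) * (p ^ (p / 2) * (2 - p) ^ ((2 - p) / 2)) - 2)
      / (p ^ (p / 2) * (2 - p) ^ ((2 - p) / 2)) := by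
  have h2p : 0 < 2 - p := by linarith
  have hc : 0 < p / (2 - p) := by positivity
  have hpow : √(p / (2 - p)) ^ (-p) * (1 + √(p / (2 - p)) ^ 2)
      = 2 / (p ^ (p / 2) * (2 - p) ^ ((2 - p) / 2)) := by
    rw [sq_sqrt hc.le, sqrt_eq_rpow, ← rpow_mul hc.le, div_rpow hp0.le h2p.le,
      show (2 - p) / 2 = 1 - p / 2 by ring, rpow_sub h2p, rpow_one,
      show 1 / 2 * -p = -(p / 2) by ring, rpow_neg hp0.le, rpow_neg h2p.le]
    field_simp
    ring
  have hsq : (p / √(p / (2 - p)) + (2 - p) * √(p / (2 - p))) ^ 2 = 4 * p * (2 - p) := by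
    have hs : 0 < √(p / (2 - p)) := sqrt_pos.mpr hc
    have hs2 : √(p / (2 - p)) ^ 2 = p / (2 - p) := sq_sqrt hc.le
    field_simp
    rw [hs2]
    field_simp
    ring
  rw [Fp_eq (sqrt_pos.mpr hc), hpow, hsq]
  field_simp
  ring

theorem one_add_two_mul_sub_sq_mul_rpow_lt_two {p : ℝ} (hp0 : 0 < p) (hp1 : p < 1) :
    (1 + 2 * p - p ^ 2) * p ^ (p / 2) * (2 - p) ^ ((2 - p) / 2) < 2 := by
  have h2p : 0 < 2 - p := by linarith
  have hfac : 1 + 2 * p - p ^ 2 = 2 * (1 - (1 - p) ^ 2 / 2) := by ring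
  have hhalf : 0 < 1 - (1 - p) ^ 2 / 2 := by nlinarith
  have hneg := symmMulLog_add_two_mul_log_neg (e := 1 - p) (by linarith) (by linarith)
  rw [symmMulLog_one_sub] at hneg
  rw [hfac, ← log_lt_log_iff (by positivity) two_pos, log_mul (by positivity) (by positivity),
    log_mul (by positivity) (by positivity), log_mul two_ne_zero hhalf.ne', log_rpow hp0,
    log_rpow h2p]
  linarith

theorem one_add_sq_lt_two_mul_rpow {p : ℝ} (hp0 : 0 < p) (hp1 : p < 1) :
    1 + (p / (2 - p)) ^ 2 < 2 * (p / (2 - p)) ^ p := by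
  have h2p : 0 < 2 - p := by linarith
  have hc : 0 < p / (2 - p) := by positivity
  have h1c : 1 + (p / (2 - p)) ^ 2 = 2 * (1 + (1 - p) ^ 2) / (2 - p) ^ 2 := by
    field_simp; ring
  have hlog : log (1 + (1 - p) ^ 2) < (1 - p) ^ 2 := by
    have hne : (1 - p) ^ 2 ≠ 0 := by positivity
    linarith [log_lt_sub_one_of_pos (by positivity : 0 < 1 + (1 - p) ^ 2) (by simpa using hne)]
  have hsym := sq_le_symmMulLog (e := 1 - p) (abs_lt.mpr ⟨by linarith, by linarith⟩)
  rw [symmMulLog_one_sub] at hsym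
  rw [← log_lt_log_iff (by positivity) (by positivity), h1c, log_mul two_ne_zero (by positivity),
    log_rpow hc, log_div (by positivity) (by positivity), log_mul two_ne_zero (by positivity),
    log_pow, log_div hp0.ne' h2p.ne']
  push_cast
  linarith

theorem lt_div_of_one_add_sq_eq_two_mul_rpow {p a : ℝ} (hp0 : 0 < p) (hp1 : p < 1)
    (ha : a ∈ Ioo (0 : ℝ) 1) (h : 1 + a ^ 2 = 2 * a ^ p) : a < p / (2 - p) := by
  set c := p / (2 - p)
  have hc : 1 + c ^ 2 < 2 * c ^ p := one_add_sq_lt_two_mul_rpow hp0 hp1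
  have hc0 : 0 < c := div_pos hp0 (by linarith)
  have hc1 : c < 1 := (div_lt_one (by linarith)).mpr (by linarith)
  have hg : StrictConcaveOn ℝ (Ici 0) (fun x : ℝ => x ^ p + x ^ p - (x ^ 2 + 1)) :=
    ((strictConcaveOn_rpow hp0 hp1).add (strictConcaveOn_rpow hp0 hp1)).sub_convexOn
      ((convexOn_pow 2).add_const 1)
  by_contra! hca
  rcases hca.eq_or_lt with rfl | hlt
  · linarith
  have hmin := hg.lt_on_openSegment hc0.le (mem_Ici.mpr zero_le_one) hc1.ne (z := a)
    (by rw [openSegment_eq_Ioo hc1]; exact ⟨hlt, ha.2⟩)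
  rw [one_rpow, show (1 : ℝ) + 1 - (1 ^ 2 + 1) = 0 by norm_num, min_eq_right (by linarith)]
    at hmin
  linarith

theorem Fp_pos_of_one_add_sq_eq_two_mul_rpow {p a : ℝ} (hp0 : 0 < p) (hp1 : p < 1)
    (ha : a ∈ Ioo (0 : ℝ) 1) (h : 1 + a ^ 2 = 2 * a ^ p) : 0 < Fp p a := by
  have hlt := lt_div_of_one_add_sq_eq_two_mul_rpow hp0 hp1 ha h
  rw [lt_div_iff₀ (by linarith)] at hlt
  have ha0 := ha.1
  have hrpow : a ^ (-p) * (1 + a ^ 2) = 2 := by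
    rw [h, rpow_neg ha0.le]
    field_simp
  have hgap : p / a + (2 - p) * a - 2 = (1 - a) * (p - a * (2 - p)) / a := by
    field_simp
    ring
  have hgt : 0 < p / a + (2 - p) * a - 2 := by
    rw [hgap]
    exact div_pos (mul_pos (by linarith [ha.2]) (by linarith)) ha0
  rw [Fp_eq ha0, hrpow]
  nlinarith

theorem Fp_sign_at_endpoints (p a1 : ℝ) (hp0 : 0 < p) (hp1 : p < 1)
    (ha1 : a1 ∈ Set.Ioo (0 : ℝ) 1) (ha1eq : 1 + a1 ^ 2 = 2 * a1 ^ p) :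
    Fp p (Real.sqrt (p / (2 - p))) < 0
    ∧ (1 + 2 * p - p ^ 2) * p ^ (p / 2) * (2 - p) ^ ((2 - p) / 2) < 2
    ∧ 0 < Fp p a1 := by
  have hK := one_add_two_mul_sub_sq_mul_rpow_lt_two hp0 hp1
  refine ⟨?_, hK, Fp_pos_of_one_add_sq_eq_two_mul_rpow hp0 hp1 ha1 ha1eq⟩
  rw [Fp_sqrt_eq hp0 (by linarith)]
  have h2p : 0 < 2 - p := by linarith
  exact div_neg_of_neg_of_pos (by linarith) (by positivity)
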